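/- arXiv:2212.12558 — 8 statements merged into one kernel-verified Lean document; each statement's English description precedes it below -/
import Mathlib

section
/- For all integers N > y > 0, the binomial probability mass at its mean satisfies C(N,y)·(y/N)^y·((N-y)/N)^(N-y) ≤ 1/2. -/
/-!
Write `T k` for the Binomial(N, p) mass at `k`, where `p = y / N`. The ratio of consecutive
masses is `T (k + 1) / T k = (N - k) p / ((k + 1) (1 - p))`; at the mean `k = y` this gives
`T (y + 1) = y / (y + 1) · T y` and `T (y - 1) = (N - y) / (N - y + 1) · T y`, and both factors
are at least `1 / 2` because `0 < y < N`. Hence `2 T y ≤ T (y - 1) + T y + T (y + 1) ≤ 1`.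
-/

open Finset

noncomputable section

def binomialMass (p : ℝ) (n k : ℕ) : ℝ :=
  n.choose k * p ^ k * (1 - p) ^ (n - k)

namespace binomialMass

variable {p : ℝ} {n k : ℕ}

lemma nonneg (hp₀ : 0 ≤ p) (hp₁ : p ≤ 1) : 0 ≤ binomialMass p n k := by
  unfold binomialMass
  have : 0 ≤ 1 - p := by linarith
  positivity

lemma sum_range_eq_one (p : ℝ) (n : ℕ) : ∑ k ∈ range (n + 1), binomialMass p n k = 1 := by
  have h := (add_pow p (1 - p) n).symm
  rw [add_sub_cancel, one_pow] at h
  rw [← h]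
  refine sum_congr rfl fun k _ => ?_
  unfold binomialMass
  ring

lemma succ_mul_eq (hkn : k < n) :
    ((k : ℝ) + 1) * (1 - p) * binomialMass p n (k + 1) = ((n : ℝ) - k) * p * binomialMass p n k := by
  have hchoose : (n.choose (k + 1) : ℝ) * (k + 1) = n.choose k * ((n : ℝ) - k) := by
    rw [← Nat.cast_sub hkn.le]
    exact_mod_cast Nat.choose_succ_right_eq n k
  have hexp : n - k = n - (k + 1) + 1 := by omega
  unfold binomialMass
  rw [hexp, pow_succ, pow_succ]
  linear_combination p ^ k * p * (1 - p) ^ (n - (k + 1)) * (1 - p) * hchoose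

lemma pred_add_self_add_succ_le_one (hp₀ : 0 ≤ p) (hp₁ : p ≤ 1) (hk : 0 < k) (hkn : k < n) :
    binomialMass p n (k - 1) + binomialMass p n k + binomialMass p n (k + 1) ≤ 1 := by
  have hsub : ({k - 1, k, k + 1} : Finset ℕ) ⊆ range (n + 1) := by
    intro i hi
    simp only [mem_insert, mem_singleton, mem_range] at hi ⊢
    omega
  calc binomialMass p n (k - 1) + binomialMass p n k + binomialMass p n (k + 1)
      = ∑ i ∈ {k - 1, k, k + 1}, binomialMass p n i := by
        rw [sum_insert (by simp only [mem_insert, mem_singleton]; omega),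
          sum_insert (by simp only [mem_singleton]; omega), sum_singleton, add_assoc]
    _ ≤ ∑ i ∈ range (n + 1), binomialMass p n i :=
        sum_le_sum_of_subset_of_nonneg hsub fun i _ _ => nonneg hp₀ hp₁
    _ = 1 := sum_range_eq_one p n

lemma mean_le_two_mul_succ (hk : 0 < k) (hkn : k < n) :
    binomialMass (k / n) n k ≤ 2 * binomialMass (k / n) n (k + 1) := by
  have hn : (0 : ℝ) < n := by exact_mod_cast hk.trans hkn
  have hnk : (k : ℝ) < n := by exact_mod_cast hkn
  have hk1 : (1 : ℝ) ≤ k := by exact_mod_cast hk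
  have hmass := nonneg (p := k / n) (n := n) (k := k) (by positivity) ((div_le_one hn).2 hnk.le)
  have hrec := succ_mul_eq (p := k / n) hkn
  rw [one_sub_div hn.ne'] at hrec
  field_simp at hrec
  have hratio : ((k : ℝ) + 1) * binomialMass (k / n) n (k + 1) = k * binomialMass (k / n) n k :=
    mul_left_cancel₀ (sub_pos.2 hnk).ne' (by linear_combination hrec)
  nlinarith

lemma mean_le_two_mul_pred (hk : 0 < k) (hkn : k < n) :
    binomialMass (k / n) n k ≤ 2 * binomialMass (k / n) n (k - 1) := by
  have hn : (0 : ℝ) < n := by exact_mod_cast hk.trans hkn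
  have hnk : (k : ℝ) + 1 ≤ n := by exact_mod_cast hkn
  have hk0 : (0 : ℝ) < k := by exact_mod_cast hk
  have hmass := nonneg (p := k / n) (n := n) (k := k - 1) (by positivity)
    ((div_le_one hn).2 (by linarith))
  have hrec := succ_mul_eq (p := k / n) (show k - 1 < n by omega)
  rw [Nat.sub_add_cancel hk, Nat.cast_sub hk, one_sub_div hn.ne'] at hrec
  push_cast at hrec
  field_simp at hrec
  have hratio : ((n : ℝ) - k) * binomialMass (k / n) n k
      = ((n : ℝ) - k + 1) * binomialMass (k / n) n (k - 1) :=
    mul_left_cancel₀ hk0.ne' (by linear_combination hrec)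
  nlinarith

end binomialMass

end

theorem binomial_pmf_at_mean_le_half (N y : ℕ) (hy : 0 < y) (hyN : y < N) :
    (N.choose y : ℝ) * ((y : ℝ) / N) ^ y * (((N : ℝ) - y) / N) ^ (N - y) ≤ 1 / 2 := by
  have hN : (0 : ℝ) < N := by exact_mod_cast hy.trans hyN
  have hp₁ : (y : ℝ) / N ≤ 1 := (div_le_one hN).2 (by exact_mod_cast hyN.le)
  have hmass : (N.choose y : ℝ) * ((y : ℝ) / N) ^ y * (((N : ℝ) - y) / N) ^ (N - y)
      = binomialMass (y / N) N y := by
    rw [binomialMass, one_sub_div hN.ne']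
  rw [hmass]
  linarith [binomialMass.pred_add_self_add_succ_le_one (by positivity) hp₁ hy hyN,
    binomialMass.mean_le_two_mul_succ hy hyN, binomialMass.mean_le_two_mul_pred hy hyN]
end

section
/- For integers 0 < y < N, the binomial coefficient satisfies C(N,y) ≤ sqrt(N/(2π·y·(N-y))) · N^N/(y^y·(N-y)^(N-y)). -/
open Real
open scoped Nat

/-!
The ratio `n! / (√(2πn) (n/e)^n)` equals `stirlingSeq n / √π`, which decreases to `1` for
`n ≥ 1`. Being at least `1` bounds `(N - y)!` from below, and being smaller at `N` than at `y`
bounds `N! / y!` from above; in the quotient of the two Stirling main terms the powers of `e`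
cancel.
-/

noncomputable def stirlingApprox (n : ℕ) : ℝ := √(2 * π * n) * (n / exp 1) ^ n

lemma stirlingApprox_pos {n : ℕ} (hn : n ≠ 0) : 0 < stirlingApprox n := by
  unfold stirlingApprox
  have : (0 : ℝ) < n := by positivity
  positivity

lemma factorial_div_stirlingApprox (n : ℕ) :
    n ! / stirlingApprox n = Stirling.stirlingSeq n / √π := by
  rw [stirlingApprox, Stirling.stirlingSeq, div_div, mul_right_comm, sqrt_mul' _ pi_pos.le]
  ring

lemma factorial_div_stirlingApprox_le_of_le {m n : ℕ} (hm : m ≠ 0) (hmn : m ≤ n) :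
    n ! / stirlingApprox n ≤ m ! / stirlingApprox m := by
  obtain ⟨k, rfl⟩ := Nat.exists_eq_succ_of_ne_zero hm
  obtain ⟨l, rfl⟩ := Nat.exists_eq_succ_of_ne_zero (by omega : n ≠ 0)
  rw [factorial_div_stirlingApprox, factorial_div_stirlingApprox]
  gcongr
  exact Stirling.stirlingSeq'_antitone (by omega : k ≤ l)

lemma stirlingApprox_add_div_mul {y b : ℕ} (hy : y ≠ 0) (hb : b ≠ 0) :
    stirlingApprox (y + b) / (stirlingApprox y * stirlingApprox b) =
      √(((y + b : ℕ) : ℝ) / (2 * π * y * b)) *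
        (((y + b : ℕ) : ℝ) ^ (y + b) / ((y : ℝ) ^ y * (b : ℝ) ^ b)) := by
  have hy' : (0 : ℝ) < y := by positivity
  have hb' : (0 : ℝ) < b := by positivity
  have hsqrt : √(((y + b : ℕ) : ℝ) / (2 * π * y * b)) =
      √(2 * π * (y + b : ℕ)) / (√(2 * π * y) * √(2 * π * b)) := by
    rw [← sqrt_mul (by positivity), ← sqrt_div' _ (by positivity)]
    congr 1
    field_simp
  rw [stirlingApprox, stirlingApprox, stirlingApprox, hsqrt]
  simp only [div_pow, pow_add]
  field_simp

lemma choose_add_le_stirlingApprox {y b : ℕ} (hy : y ≠ 0) (hb : b ≠ 0) :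
    ((y + b).choose y : ℝ) ≤ stirlingApprox (y + b) / (stirlingApprox y * stirlingApprox b) := by
  have hAy := stirlingApprox_pos hy
  have hAb := stirlingApprox_pos hb
  have hAN := stirlingApprox_pos (n := y + b) (by omega)
  have hN : ((y + b)! : ℝ) ≤ y ! * (stirlingApprox (y + b) / stirlingApprox y) := by
    have hratio := factorial_div_stirlingApprox_le_of_le hy (Nat.le_add_right y b)
    rw [div_le_div_iff₀ hAN hAy] at hratio
    rw [mul_div_assoc', le_div_iff₀ hAy]
    linarith
  calc ((y + b).choose y : ℝ) = (y + b)! / (y ! * b !) := Nat.cast_add_choose ℝ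
    _ ≤ y ! * (stirlingApprox (y + b) / stirlingApprox y) / (y ! * stirlingApprox b) := by
      gcongr
      exact Stirling.le_factorial_stirling b
    _ = stirlingApprox (y + b) / (stirlingApprox y * stirlingApprox b) := by
      field_simp

theorem choose_le_stirling_bound (N y : ℕ) (hy : 0 < y) (hyN : y < N) :
    (N.choose y : ℝ) ≤
      Real.sqrt ((N : ℝ) / (2 * Real.pi * y * ((N : ℝ) - y))) *
        ((N : ℝ) ^ N / ((y : ℝ) ^ y * ((N : ℝ) - y) ^ (N - y))) := by
  obtain ⟨b, rfl⟩ := Nat.exists_eq_add_of_le hyN.le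
  have hb : b ≠ 0 := by omega
  have hsub : ((y + b : ℕ) : ℝ) - y = b := by push_cast; ring
  rw [hsub, Nat.add_sub_cancel_left, ← stirlingApprox_add_div_mul hy.ne' hb]
  exact choose_add_le_stirlingApprox hy.ne' hb
end

section
/- The sequence b_n = (n-2)^(n-1) · n^(-n) · (3n - 2) is monotonically increasing for integers n ≥ 3, and b_3 ≥ 1/4; consequently (n-2)^(n-1) · (3n-2) / n^n ≥ 1/4 for all n ≥ 3. -/
/-!
Write `x = n` and `a = x (x - 1)`. Since `(x - 2)(x + 1) = a - 2`, the inequality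
`b n ≤ b (n + 1)` is `(1 - 2 / a) ^ (n - 1) (x + 1) ^ 2 (3x - 2) ≤ a (3x + 1)`. Bounding the
power by its binomial expansion truncated after the quadratic term (Bonferroni) leaves a
polynomial inequality in `x`, true for `x ≥ 3`. Monotonicity then gives `b n ≥ b 3 = 7 / 27`.
-/

noncomputable def bSeq (n : ℕ) : ℝ :=
  ((n : ℝ) - 2) ^ (n - 1) * (3 * (n : ℝ) - 2) / (n : ℝ) ^ n

theorem one_sub_pow_le_one_sub_mul_add_choose_two_mul_sq {t : ℝ} (ht₀ : 0 ≤ t) (ht₁ : t ≤ 1)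
    (d : ℕ) : (1 - t) ^ d ≤ 1 - d * t + d.choose 2 * t ^ 2 := by
  induction d with
  | zero => simp
  | succ d ih =>
    have hd : (0 : ℝ) ≤ d * (d - 1) := by
      rcases d with _ | d
      · simp
      · push_cast; nlinarith
    rw [Nat.cast_choose_two] at ih ⊢
    push_cast
    calc (1 - t) ^ (d + 1) = (1 - t) ^ d * (1 - t) := pow_succ _ _
      _ ≤ (1 - d * t + d * (d - 1) / 2 * t ^ 2) * (1 - t) := by gcongr
      _ ≤ 1 - (d + 1) * t + (d + 1) * (d + 1 - 1) / 2 * t ^ 2 := by nlinarith [pow_nonneg ht₀ 3]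

theorem bSeq_le_bSeq_succ {n : ℕ} (hn : 3 ≤ n) : bSeq n ≤ bSeq (n + 1) := by
  obtain ⟨d, rfl⟩ : ∃ d, n = d + 1 := ⟨n - 1, by omega⟩
  have hx : (3 : ℝ) ≤ d + 1 := by exact_mod_cast hn
  set x : ℝ := d + 1 with hxd
  have hd : (d : ℝ) = x - 1 := by rw [hxd]; ring
  unfold bSeq
  simp only [Nat.add_sub_cancel, Nat.cast_add, Nat.cast_one]
  rw [← hxd, div_le_div_iff₀ (by positivity) (by positivity)]
  set a : ℝ := x * (x - 1) with ha
  have ha₂ : 2 ≤ a := by nlinarith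
  have hquad : (1 - d * (2 / a) + d.choose 2 * (2 / a) ^ 2) * ((x + 1) ^ 2 * (3 * x - 2)) ≤
      a * (3 * x + 1) := by
    rw [Nat.cast_choose_two, hd, ha, div_pow, ← sub_nonneg]
    have hx₀ : 0 < x := by linarith
    have hx₁ : 0 < x - 1 := by linarith
    field_simp
    -- the right-hand side is `2 (x ^ 3 (x - 2) + 7 x ^ 2 + 2 x - 4)`
    nlinarith [pow_nonneg hx₀.le 3]
  calc (x - 2) ^ d * (3 * x - 2) * (x + 1) ^ (d + 1 + 1)
      = (a - 2) ^ d * ((x + 1) ^ 2 * (3 * x - 2)) := by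
        rw [show a - 2 = (x - 2) * (x + 1) by ring, mul_pow]; ring
    _ = a ^ d * (1 - 2 / a) ^ d * ((x + 1) ^ 2 * (3 * x - 2)) := by
        rw [← mul_pow, mul_one_sub, mul_div_cancel₀ _ (by positivity)]
    _ ≤ a ^ d * (1 - d * (2 / a) + d.choose 2 * (2 / a) ^ 2) * ((x + 1) ^ 2 * (3 * x - 2)) := by
        gcongr
        · exact mul_nonneg (sq_nonneg _) (by linarith)
        · exact one_sub_pow_le_one_sub_mul_add_choose_two_mul_sq (by positivity)
            ((div_le_one (by positivity)).2 ha₂) d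
    _ ≤ a ^ d * (a * (3 * x + 1)) := by rw [mul_assoc]; gcongr
    _ = (x + 1 - 2) ^ (d + 1) * (3 * (x + 1) - 2) * x ^ (d + 1) := by rw [ha, mul_pow]; ring

theorem b_seq_monotone_and_ge_quarter :
    (∀ m n : ℕ, 3 ≤ m → m ≤ n →
      ((m : ℝ) - 2) ^ (m - 1) * (3 * (m : ℝ) - 2) / (m : ℝ) ^ m ≤
        ((n : ℝ) - 2) ^ (n - 1) * (3 * (n : ℝ) - 2) / (n : ℝ) ^ n) ∧
    (1 / 4 : ℝ) ≤ ((3 : ℝ) - 2) ^ (3 - 1) * (3 * (3 : ℝ) - 2) / (3 : ℝ) ^ 3 ∧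
    (∀ n : ℕ, 3 ≤ n →
      (1 / 4 : ℝ) ≤ ((n : ℝ) - 2) ^ (n - 1) * (3 * (n : ℝ) - 2) / (n : ℝ) ^ n) := by
  have hmono : MonotoneOn bSeq (Set.Ici 3) :=
    monotoneOn_nat_Ici_of_le_succ fun n hn => bSeq_le_bSeq_succ hn
  have hb₃ : 1 / 4 ≤ bSeq 3 := by norm_num [bSeq]
  refine ⟨fun m n hm hmn => hmono hm (le_trans hm hmn) hmn, by norm_num, fun n hn => ?_⟩
  exact hb₃.trans (hmono Set.self_mem_Ici hn hn)
end

section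
/- For every real x with -1 < x ≤ 0, one has log(1+x) ≤ 3x(2+x)/(6 + 6x + x²). -/
open Real Set

/-- The `[2/2]` Padé approximant of `log (1 + x)` at `0`. -/
noncomputable def padeLogOneAdd (x : ℝ) : ℝ := 3 * x * (2 + x) / (6 + 6 * x + x ^ 2)

lemma padeLogOneAdd_denom_pos {x : ℝ} (hx : -1 < x) : 0 < 6 + 6 * x + x ^ 2 := by
  nlinarith

lemma hasDerivAt_log_one_add_sub_padeLogOneAdd {x : ℝ} (hx : -1 < x) :
    HasDerivAt (fun y => log (1 + y) - padeLogOneAdd y)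
      (x ^ 4 / ((1 + x) * (6 + 6 * x + x ^ 2) ^ 2)) x := by
  have h1 : 0 < 1 + x := by linarith
  have hD := padeLogOneAdd_denom_pos hx
  have hlog : HasDerivAt (fun y => log (1 + y)) (1 / (1 + x)) x := by
    simpa using ((hasDerivAt_id' x).const_add 1).log h1.ne'
  have hnum : HasDerivAt (fun y => 3 * y * (2 + y)) (6 + 6 * x) x :=
    (((hasDerivAt_id' x).const_mul 3).mul ((hasDerivAt_id' x).const_add 2)).congr_deriv
      (by ring)
  have hden : HasDerivAt (fun y => 6 + 6 * y + y ^ 2) (6 + 2 * x) x :=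
    ((((hasDerivAt_id' x).const_mul 6).const_add 6).add (hasDerivAt_pow 2 x)).congr_deriv
      (by ring)
  refine (hlog.sub (hnum.div hden hD.ne')).congr_deriv ?_
  field_simp
  ring

lemma monotoneOn_log_one_add_sub_padeLogOneAdd :
    MonotoneOn (fun y => log (1 + y) - padeLogOneAdd y) (Ioi (-1)) := by
  have hderiv := fun x (hx : x ∈ Ioi (-1 : ℝ)) => hasDerivAt_log_one_add_sub_padeLogOneAdd hx
  refine monotoneOn_of_hasDerivWithinAt_nonneg (convex_Ioi _)
    (f' := fun x => x ^ 4 / ((1 + x) * (6 + 6 * x + x ^ 2) ^ 2))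
    (fun x hx => (hderiv x hx).continuousAt.continuousWithinAt) ?_ ?_ <;> rw [interior_Ioi]
  · exact fun x hx => (hderiv x hx).hasDerivWithinAt
  · intro x hx
    have h1 : 0 < 1 + x := by linarith [mem_Ioi.mp hx]
    positivity

theorem log_one_add_le_pade2 (x : ℝ) (hx1 : -1 < x) (hx0 : x ≤ 0) :
    Real.log (1 + x) ≤ 3 * x * (2 + x) / (6 + 6 * x + x ^ 2) := by
  simpa [padeLogOneAdd] using
    monotoneOn_log_one_add_sub_padeLogOneAdd hx1 (mem_Ioi.mpr neg_one_lt_zero) hx0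
end

section
/- For every positive integer n, the harmonic number H(n) = Σ_{k=1}^n 1/k satisfies log(n) + γ + 1/(2n+1) ≤ H(n) ≤ log(n) + γ + 1/(2n-1), where γ is the Euler–Mascheroni constant. -/
/-!
The sequence `H(m) - log m - 1/(2m+1)` decreases and `H(m) - log m - 1/(2m)` increases for
`m ≥ 1`, and both tend to `γ`; this gives the lower bound and the sharper upper bound
`H(n) ≤ log n + γ + 1/(2n)`. The two monotonicity steps amount to
`2/(2m+1) ≤ log (1 + 1/m) ≤ (1/m + 1/(m+1))/2`, which are the first partial sum and the tail
estimate of the series `log ((1+x)/(1-x)) = 2 ∑ x^(2k+1)/(2k+1)` at `x = 1/(2m+1)`.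
-/

open Filter Topology

lemma le_of_tendsto_of_succ_le {α : Type*} [TopologicalSpace α] [Preorder α]
    [OrderClosedTopology α] {u : ℕ → α} {L : α} (hu : Tendsto u atTop (𝓝 L)) {n : ℕ}
    (h : ∀ m ≥ n, u (m + 1) ≤ u m) : L ≤ u n := by
  have hanti : Antitone fun k => u (k + n) :=
    antitone_nat_of_succ_le fun k => by simpa [Nat.succ_add] using h (k + n) (Nat.le_add_left n k)
  simpa using hanti.le_of_tendsto ((tendsto_add_atTop_iff_nat n).2 hu) 0

lemma ge_of_tendsto_of_le_succ {α : Type*} [TopologicalSpace α] [Preorder α]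
    [OrderClosedTopology α] {u : ℕ → α} {L : α} (hu : Tendsto u atTop (𝓝 L)) {n : ℕ}
    (h : ∀ m ≥ n, u m ≤ u (m + 1)) : u n ≤ L :=
  le_of_tendsto_of_succ_le (α := αᵒᵈ) hu h

namespace Real

lemma one_add_div_one_sub_eq_one_add_inv {a : ℝ} (ha : 0 < a) :
    (1 + 1 / (2 * a + 1)) / (1 - 1 / (2 * a + 1)) = 1 + a⁻¹ := by
  field_simp
  ring

lemma two_div_two_mul_add_one_le_log_one_add_inv {a : ℝ} (ha : 0 < a) :
    2 / (2 * a + 1) ≤ log (1 + a⁻¹) := by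
  have h := sum_range_le_log_div (x := 1 / (2 * a + 1)) (by positivity)
    ((div_lt_one (by positivity)).2 (by linarith)) 1
  simp only [Finset.sum_range_one, one_add_div_one_sub_eq_one_add_inv ha] at h
  norm_num at h
  rw [div_eq_mul_inv]
  linarith

lemma log_one_add_inv_le_inv_add_inv_div_two {a : ℝ} (ha : 0 < a) :
    log (1 + a⁻¹) ≤ (a⁻¹ + (a + 1)⁻¹) / 2 := by
  have h := log_div_le_sum_range_add (x := 1 / (2 * a + 1)) (by positivity)
    ((div_lt_one (by positivity)).2 (by linarith)) 0
  have htail : 1 / (2 * a + 1) / (1 - (1 / (2 * a + 1)) ^ 2) = (a⁻¹ + (a + 1)⁻¹) / 4 := by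
    have hden : 1 - (1 / (2 * a + 1)) ^ 2 = 4 * a * (a + 1) / (2 * a + 1) ^ 2 := by
      field_simp
      ring
    have : a + 1 ≠ 0 := by positivity
    have : 2 * a + 1 ≠ 0 := by positivity
    rw [hden]
    field_simp
    ring
  simp only [Finset.sum_range_zero, zero_add, mul_zero, pow_one] at h
  rw [one_add_div_one_sub_eq_one_add_inv ha, htail] at h
  linarith

lemma harmonic_succ_sub_log_succ {m : ℕ} (hm : 0 < m) :
    (harmonic (m + 1) : ℝ) - log (m + 1 : ℕ) =
      harmonic m - log m + ((m : ℝ) + 1)⁻¹ - log (1 + (m : ℝ)⁻¹) := by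
  have hm' : (0 : ℝ) < m := by exact_mod_cast hm
  have hlog : log ((m : ℝ) + 1) = log m + log (1 + (m : ℝ)⁻¹) := by
    rw [← log_mul hm'.ne' (by positivity), mul_add, mul_inv_cancel₀ hm'.ne', mul_one]
  rw [harmonic_succ]
  push_cast
  rw [hlog]
  ring

lemma tendsto_harmonic_sub_log_sub_inv_two_mul_add (c : ℝ) :
    Tendsto (fun m : ℕ => (harmonic m : ℝ) - log m - (2 * m + c)⁻¹) atTop
      (𝓝 eulerMascheroniConstant) := by
  have h : Tendsto (fun m : ℕ => (2 * (m : ℝ) + c)⁻¹) atTop (𝓝 0) :=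
    tendsto_inv_atTop_zero.comp <| tendsto_atTop_add_const_right _ c <|
      tendsto_natCast_atTop_atTop.const_mul_atTop two_pos
  simpa using tendsto_harmonic_sub_log.sub h

lemma harmonic_sub_log_sub_inv_two_mul_add_one_succ_le {m : ℕ} (hm : 0 < m) :
    (harmonic (m + 1) : ℝ) - log (m + 1 : ℕ) - (2 * (m + 1 : ℕ) + 1 : ℝ)⁻¹ ≤
      harmonic m - log m - (2 * m + 1 : ℝ)⁻¹ := by
  have hm' : (0 : ℝ) < m := by exact_mod_cast hm
  have hlog := two_div_two_mul_add_one_le_log_one_add_inv hm'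
  have hgap : ((m : ℝ) + 1)⁻¹ + (2 * (m : ℝ) + 1)⁻¹ - (2 * ((m : ℝ) + 1) + 1)⁻¹ ≤
      2 / (2 * m + 1) := by
    rw [← sub_nonneg]
    have : 2 / (2 * (m : ℝ) + 1) -
        (((m : ℝ) + 1)⁻¹ + (2 * (m : ℝ) + 1)⁻¹ - (2 * ((m : ℝ) + 1) + 1)⁻¹) =
        1 / ((m + 1) * (2 * m + 1) * (2 * m + 3)) := by
      field_simp
      ring
    rw [this]
    positivity
  rw [harmonic_succ_sub_log_succ hm]
  push_cast
  linarith

lemma harmonic_sub_log_sub_inv_two_mul_le_succ {m : ℕ} (hm : 0 < m) :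
    (harmonic m : ℝ) - log m - (2 * m : ℝ)⁻¹ ≤
      harmonic (m + 1) - log (m + 1 : ℕ) - (2 * (m + 1 : ℕ) : ℝ)⁻¹ := by
  have hlog := log_one_add_inv_le_inv_add_inv_div_two (Nat.cast_pos.2 hm : (0 : ℝ) < m)
  rw [harmonic_succ_sub_log_succ hm]
  push_cast
  rw [mul_inv, mul_inv]
  linarith

theorem log_add_eulerMascheroniConstant_add_inv_le_harmonic {n : ℕ} (hn : 0 < n) :
    log n + eulerMascheroniConstant + (2 * n + 1 : ℝ)⁻¹ ≤ harmonic n := by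
  have := le_of_tendsto_of_succ_le (tendsto_harmonic_sub_log_sub_inv_two_mul_add 1)
    fun m hm => harmonic_sub_log_sub_inv_two_mul_add_one_succ_le (hn.trans_le hm)
  linarith

theorem harmonic_le_log_add_eulerMascheroniConstant_add_inv {n : ℕ} (hn : 0 < n) :
    harmonic n ≤ log n + eulerMascheroniConstant + (2 * n : ℝ)⁻¹ := by
  have hlim := tendsto_harmonic_sub_log_sub_inv_two_mul_add 0
  simp only [add_zero] at hlim
  have := ge_of_tendsto_of_le_succ hlim
    fun m hm => harmonic_sub_log_sub_inv_two_mul_le_succ (hn.trans_le hm)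
  linarith

end Real

theorem harmonic_log_gamma_bounds (n : ℕ) (hn : 0 < n) :
    Real.log n + Real.eulerMascheroniConstant + 1 / (2 * (n : ℝ) + 1) ≤ (harmonic n : ℝ) ∧
    (harmonic n : ℝ) ≤ Real.log n + Real.eulerMascheroniConstant + 1 / (2 * (n : ℝ) - 1) := by
  have hn' : (1 : ℝ) ≤ n := by exact_mod_cast hn
  have hinv : (2 * n : ℝ)⁻¹ ≤ 1 / (2 * n - 1) := by
    rw [← one_div]
    exact one_div_le_one_div_of_le (by linarith) (by linarith)
  rw [one_div]
  exact ⟨Real.log_add_eulerMascheroniConstant_add_inv_le_harmonic hn,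
    (Real.harmonic_le_log_add_eulerMascheroniConstant_add_inv hn).trans (by linarith)⟩
end

section
/- For each fixed integer d with 1 ≤ d ≤ n-1, the function n ↦ C(n,d)·(d/n)^d·((n-d)/n)^(n-d) is nonincreasing in n (for integer n > d), i.e., the binomial probability mass at the integer mean d of Binomial(n, d/n) does not increase with n when d is fixed. -/
/-!
Writing `f n` for the mass, `C(n+1,d) (n+1-d) = C(n,d) (n+1)` gives
`f (n+1) / f n = (1 + 1/(n-d))^(n-d) / (1 + 1/n)^n`, which is at most `1` because `(1 + 1/k)^k`
increases with `k`; the latter follows from Bernoulli's inequality applied to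
`(1 + 1/(k+1)) / (1 + 1/k) = 1 - 1/(k+1)^2`.
-/

theorem one_add_one_div_pow_le_succ (n : ℕ) :
    (1 + 1 / (n : ℝ)) ^ n ≤ (1 + 1 / ((n + 1 : ℕ) : ℝ)) ^ (n + 1) := by
  rcases Nat.eq_zero_or_pos n with rfl | hn
  · norm_num
  have hn' : (0 : ℝ) < n := by exact_mod_cast hn
  set a : ℝ := 1 + 1 / n with ha_def
  set b : ℝ := 1 + 1 / ((n + 1 : ℕ) : ℝ) with hb_def
  have ha : 0 < a := by positivity
  have hratio : b / a = 1 + -(1 / ((n : ℝ) + 1) ^ 2) := by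
    rw [ha_def, hb_def]; push_cast; field_simp; ring
  have hsmall : -2 ≤ -(1 / ((n : ℝ) + 1) ^ 2) := by
    have : 1 / ((n : ℝ) + 1) ^ 2 ≤ 1 := by
      rw [div_le_one (by positivity)]; nlinarith
    linarith
  have hbernoulli : 1 / a ≤ (b / a) ^ (n + 1) :=
    calc 1 / a = 1 + ((n + 1 : ℕ) : ℝ) * -(1 / ((n : ℝ) + 1) ^ 2) := by
          rw [ha_def]; push_cast; field_simp; ring
      _ ≤ (b / a) ^ (n + 1) := hratio ▸ one_add_mul_le_pow hsmall _
  calc a ^ n = a ^ (n + 1) * (1 / a) := by field_simp; ring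
    _ ≤ a ^ (n + 1) * (b / a) ^ (n + 1) := by gcongr
    _ = b ^ (n + 1) := by rw [div_pow]; field_simp

theorem monotone_one_add_one_div_pow : Monotone fun n : ℕ => (1 + 1 / (n : ℝ)) ^ n :=
  monotone_nat_of_le_succ one_add_one_div_pow_le_succ

noncomputable def binomialMassAtMean (d n : ℕ) : ℝ :=
  (n.choose d : ℝ) * ((d : ℝ) / n) ^ d * (((n : ℝ) - d) / n) ^ (n - d)

theorem binomialMassAtMean_add (d k : ℕ) :
    binomialMassAtMean d (d + k) =
      (d + k).choose d * (d : ℝ) ^ d * (k : ℝ) ^ k / ((d : ℝ) + k) ^ (d + k) := by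
  rw [binomialMassAtMean, Nat.add_sub_cancel_left, pow_add, div_pow, div_pow]
  push_cast
  rw [add_sub_cancel_left]
  ring

theorem binomialMassAtMean_succ_mul (d k : ℕ) (hk : k ≠ 0) :
    binomialMassAtMean d (d + k + 1) * (1 + 1 / ((d + k : ℕ) : ℝ)) ^ (d + k) =
      binomialMassAtMean d (d + k) * (1 + 1 / (k : ℝ)) ^ k := by
  have hchoose : ((d + k + 1).choose d : ℝ) * (k + 1) = (d + k).choose d * (d + k + 1) := by
    have := Nat.choose_mul_succ_eq (d + k) d
    rw [show d + k + 1 - d = k + 1 by omega] at this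
    exact_mod_cast this.symm
  have hk' : (0 : ℝ) < k := by positivity
  rw [add_assoc, binomialMassAtMean_add, ← add_assoc, binomialMassAtMean_add]
  push_cast
  rw [one_add_div hk'.ne', one_add_div (by positivity), div_pow, div_pow]
  field_simp
  rw [pow_succ, pow_succ]
  linear_combination ((k : ℝ) + 1) ^ k * ((d : ℝ) + k + 1) ^ (d + k) * hchoose

theorem binomialMassAtMean_succ_le {d n : ℕ} (hdn : d < n) :
    binomialMassAtMean d (n + 1) ≤ binomialMassAtMean d n := by
  obtain ⟨k, hk, rfl⟩ : ∃ k, k ≠ 0 ∧ n = d + k := ⟨n - d, by omega, by omega⟩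
  have hmass : 0 ≤ binomialMassAtMean d (d + k) := by
    rw [binomialMassAtMean_add]; positivity
  refine le_of_mul_le_mul_right ?_
    (by positivity : 0 < (1 + 1 / ((d + k : ℕ) : ℝ)) ^ (d + k))
  calc binomialMassAtMean d (d + k + 1) * (1 + 1 / ((d + k : ℕ) : ℝ)) ^ (d + k)
      = binomialMassAtMean d (d + k) * (1 + 1 / (k : ℝ)) ^ k :=
        binomialMassAtMean_succ_mul d k hk
    _ ≤ binomialMassAtMean d (d + k) * (1 + 1 / ((d + k : ℕ) : ℝ)) ^ (d + k) :=
        mul_le_mul_of_nonneg_left (monotone_one_add_one_div_pow (Nat.le_add_left k d)) hmass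

theorem antitoneOn_binomialMassAtMean (d : ℕ) :
    AntitoneOn (binomialMassAtMean d) (Set.Ioi d) :=
  antitoneOn_nat_Ici_of_succ_le fun _ hn => binomialMassAtMean_succ_le hn

theorem binomial_mass_at_mean_antitone_general (d : ℕ) :
    ∀ m n : ℕ, d < m → m ≤ n →
      (n.choose d : ℝ) * ((d : ℝ) / n) ^ d * (((n : ℝ) - d) / n) ^ (n - d) ≤
        (m.choose d : ℝ) * ((d : ℝ) / m) ^ d * (((m : ℝ) - d) / m) ^ (m - d) :=
  fun _ _ hm hmn => antitoneOn_binomialMassAtMean d hm (hm.trans_le hmn) hmn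

theorem binomial_mass_at_mean_antitone (d : ℕ) (hd : 1 ≤ d) :
    ∀ m n : ℕ, d < m → m ≤ n →
      (n.choose d : ℝ) * ((d : ℝ) / n) ^ d * (((n : ℝ) - d) / n) ^ (n - d) ≤
        (m.choose d : ℝ) * ((d : ℝ) / m) ^ d * (((m : ℝ) - d) / m) ^ (m - d) :=
  binomial_mass_at_mean_antitone_general d
end

section
/- For a Binomial(n, p) random variable with integer mean np = m (an integer), the probability of obtaining at least m successes is at least 1/2; equivalently Σ_{k=m}^n C(n,k) (m/n)^k (1 - m/n)^(n-k) ≥ 1/2. -/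
/-!
Write `b k = C(n,k) pᵏ (1-p)ⁿ⁻ᵏ` with `p = m/n`; we need `∑_{k < m} b k ≤ ∑_{k ≥ m} b k`.

If `2m ≤ n`, the weights pair off: `b (m-1-j) ≤ b (m+j)` for `j < m`, by induction on `j` using
`b (k+1) / b k = (n-k) p / ((k+1) (1-p))`, so the lower tail is at most `∑_{m ≤ k < 2m} b k`.

If `2m > n`, the derivative of the upper tail in `p` telescopes, giving
`∑_{k ≥ m} b k = m C(n,m) ∫₀ᵖ f` with `f t = t^(m-1) (1-t)^(n-m)`; as the total mass is `1`, it
suffices that `∫ₚ¹ f ≤ ∫₀ᵖ f`. The mode `x = (m-1)/(n-1)` of `f` is at most `p`, and since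
`m - 1 ≥ n - m`, `f` falls off faster to the right of `x` than to the left: `f (x+u) ≤ f (x-u)`.
After taking logarithms this says that `c ↦ c log ((c+v)/(c-v))` is decreasing, which is clear from
its series `∑ₖ 2 v (v/c)^(2k) / (2k+1)`.
-/

open Finset Real

noncomputable def binomialTerm (n : ℕ) (p : ℝ) (k : ℕ) : ℝ :=
  n.choose k * p ^ k * (1 - p) ^ (n - k)

theorem sum_range_binomialTerm (n : ℕ) (p : ℝ) :
    ∑ k ∈ range (n + 1), binomialTerm n p k = 1 := by
  have h := add_pow p (1 - p) n
  rw [add_sub_cancel, one_pow] at h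
  rw [h]
  exact sum_congr rfl fun k _ ↦ by rw [binomialTerm]; ring

theorem binomialTerm_nonneg {n : ℕ} {p : ℝ} (hp₀ : 0 ≤ p) (hp₁ : p ≤ 1) (k : ℕ) :
    0 ≤ binomialTerm n p k := by
  have : 0 ≤ 1 - p := sub_nonneg.2 hp₁
  unfold binomialTerm
  positivity

theorem sum_range_add_sum_Icc_binomialTerm {n m : ℕ} {p : ℝ} (hm : m ≤ n + 1) :
    ∑ k ∈ range m, binomialTerm n p k + ∑ k ∈ Icc m n, binomialTerm n p k = 1 := by
  rw [← sum_range_binomialTerm n p, range_eq_Ico, range_eq_Ico, ← Ico_add_one_right_eq_Icc,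
    sum_Ico_consecutive _ m.zero_le hm]

theorem sq_mul_sub_mul_add_le {m q s : ℕ} (hmq : m ≤ q) (hs : s ≤ m) :
    q ^ 2 * ((m - s) * (m + s)) ≤ m ^ 2 * ((q + 1 - s) * (q + 1 + s)) := by
  obtain ⟨r, rfl⟩ := Nat.exists_eq_add_of_le hs
  obtain ⟨e, rfl⟩ := Nat.exists_eq_add_of_le hmq
  rw [show s + r - s = r by omega, show s + r + e + 1 - s = r + e + 1 by omega]
  nlinarith [Nat.zero_le (s * e), Nat.zero_le (s * r * e), Nat.zero_le (s ^ 2 * e * r)]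

/-- `b (m-1-j) ≤ b (m+j)` for `p = m/n`, with the common factors cleared. -/
theorem choose_mul_pow_le_choose_mul_pow {n m j : ℕ} (h : 2 * m ≤ n) (hj : j < m) :
    n.choose (m - 1 - j) * (n - m) ^ (2 * j + 1) ≤ n.choose (m + j) * m ^ (2 * j + 1) := by
  obtain ⟨q, rfl⟩ := Nat.exists_eq_add_of_le (show m ≤ n by omega)
  rw [Nat.add_sub_cancel_left]
  induction j with
  | zero =>
    have h := Nat.choose_succ_right_eq (m + q) (m - 1)
    rw [Nat.sub_add_cancel (by omega), show m + q - (m - 1) = q + 1 by omega] at h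
    simpa [h] using Nat.mul_le_mul_left ((m + q).choose (m - 1)) q.le_succ
  | succ j ih =>
    have hup := Nat.choose_succ_right_eq (m + q) (m + j)
    have hdown := Nat.choose_succ_right_eq (m + q) (m - 1 - (j + 1))
    rw [show m - 1 - (j + 1) + 1 = m - 1 - j by omega,
      show m + q - (m - 1 - (j + 1)) = q + 1 + (j + 1) by omega] at hdown
    rw [show m + q - (m + j) = q + 1 - (j + 1) by omega] at hup
    have hquad := sq_mul_sub_mul_add_le (m := m) (q := q) (s := j + 1) (by omega) (by omega)
    rw [show m - (j + 1) = m - 1 - j by omega] at hquad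
    set C := (m + q).choose
    refine Nat.le_of_mul_le_mul_right (c := (m + (j + 1)) * (q + 1 + (j + 1))) ?_ (by positivity)
    calc C (m - 1 - (j + 1)) * q ^ (2 * (j + 1) + 1) * ((m + (j + 1)) * (q + 1 + (j + 1)))
        = C (m - 1 - (j + 1)) * (q + 1 + (j + 1)) * (q ^ (2 * j + 3) * (m + j + 1)) := by ring
      _ = C (m - 1 - j) * (m - 1 - j) * (q ^ (2 * j + 3) * (m + j + 1)) := by rw [hdown]
      _ = C (m - 1 - j) * q ^ (2 * j + 1) * (q ^ 2 * ((m - 1 - j) * (m + (j + 1)))) := by ring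
      _ ≤ C (m + j) * m ^ (2 * j + 1) * (m ^ 2 * ((q + 1 - (j + 1)) * (q + 1 + (j + 1)))) :=
          Nat.mul_le_mul (ih (by omega)) hquad
      _ = C (m + j) * (q + 1 - (j + 1)) * (m ^ (2 * j + 3) * (q + j + 2)) := by ring
      _ = C (m + j + 1) * (m + j + 1) * (m ^ (2 * j + 3) * (q + j + 2)) := by rw [hup]
      _ = C (m + (j + 1)) * m ^ (2 * (j + 1) + 1) * ((m + (j + 1)) * (q + 1 + (j + 1))) := by
          rw [← add_assoc]; ring

theorem binomialTerm_div_eq {n m k : ℕ} (hn : n ≠ 0) (hm : m ≤ n) (hk : k ≤ n) :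
    binomialTerm n (m / n) k =
      ((n.choose k * (m ^ k * (n - m) ^ (n - k)) : ℕ) : ℝ) / n ^ n := by
  have hn' : (n : ℝ) ≠ 0 := Nat.cast_ne_zero.2 hn
  have hq : 1 - (m : ℝ) / n = ((n - m : ℕ) : ℝ) / n := by
    rw [Nat.cast_sub hm]; field_simp
  rw [binomialTerm, hq, div_pow, div_pow, ← Nat.add_sub_of_le hk, pow_add,
    Nat.add_sub_cancel_left]
  push_cast
  field_simp

theorem binomialTerm_sub_le_binomialTerm_add {n m j : ℕ} (h : 2 * m ≤ n) (hj : j < m) :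
    binomialTerm n (m / n) (m - 1 - j) ≤ binomialTerm n (m / n) (m + j) := by
  rw [binomialTerm_div_eq (by omega) (by omega) (by omega),
    binomialTerm_div_eq (by omega) (by omega) (by omega)]
  gcongr ?_ / _
  norm_cast
  calc n.choose (m - 1 - j) * (m ^ (m - 1 - j) * (n - m) ^ (n - (m - 1 - j)))
      = n.choose (m - 1 - j) * (n - m) ^ (2 * j + 1) *
          (m ^ (m - 1 - j) * (n - m) ^ (n - (m + j))) := by
        rw [show n - (m - 1 - j) = 2 * j + 1 + (n - (m + j)) by omega]; ring
    _ ≤ n.choose (m + j) * m ^ (2 * j + 1) * (m ^ (m - 1 - j) * (n - m) ^ (n - (m + j))) :=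
        Nat.mul_le_mul_right _ (choose_mul_pow_le_choose_mul_pow h hj)
    _ = n.choose (m + j) * (m ^ (m + j) * (n - m) ^ (n - (m + j))) := by
        rw [show m + j = 2 * j + 1 + (m - 1 - j) by omega]; ring

theorem half_le_sum_binomialTerm_of_two_mul_le {n m : ℕ} (h : 2 * m ≤ n) :
    1 / 2 ≤ ∑ k ∈ Icc m n, binomialTerm n (m / n) k := by
  have hp₀ : (0 : ℝ) ≤ m / n := by positivity
  have hp₁ : (m : ℝ) / n ≤ 1 :=
    div_le_one_of_le₀ (by exact_mod_cast (by omega : m ≤ n)) n.cast_nonneg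
  have hlower :
      ∑ k ∈ range m, binomialTerm n (m / n) k ≤ ∑ k ∈ Icc m n, binomialTerm n (m / n) k :=
    calc ∑ k ∈ range m, binomialTerm n (m / n) k
        = ∑ j ∈ range m, binomialTerm n (m / n) (m - 1 - j) := (sum_range_reflect _ m).symm
      _ ≤ ∑ j ∈ range m, binomialTerm n (m / n) (m + j) :=
          sum_le_sum fun j hj ↦ binomialTerm_sub_le_binomialTerm_add h (mem_range.1 hj)
      _ = ∑ k ∈ Ico m (2 * m), binomialTerm n (m / n) k := by
          rw [sum_Ico_eq_sum_range, show 2 * m - m = m by omega]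
      _ ≤ ∑ k ∈ Icc m n, binomialTerm n (m / n) k :=
          sum_le_sum_of_subset_of_nonneg (fun k hk ↦ by grind)
            fun k _ _ ↦ binomialTerm_nonneg hp₀ hp₁ k
  linarith [sum_range_add_sum_Icc_binomialTerm (n := n) (p := m / n) (m := m) (by omega)]

theorem hasDerivAt_binomialTerm (n k : ℕ) (p : ℝ) :
    HasDerivAt (fun x ↦ binomialTerm n x k)
      (k * n.choose k * p ^ (k - 1) * (1 - p) ^ (n - k) -
        ((k + 1 : ℕ) : ℝ) * n.choose (k + 1) * p ^ k * (1 - p) ^ (n - (k + 1))) p := by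
  have hcoeff : ((k + 1 : ℕ) * n.choose (k + 1) : ℝ) = n.choose k * (n - k : ℕ) := by
    exact_mod_cast (mul_comm _ _).trans (Nat.choose_succ_right_eq n k)
  have h : HasDerivAt (fun x ↦ binomialTerm n x k) _ p :=
    ((hasDerivAt_pow k p).const_mul (n.choose k : ℝ)).mul
      ((hasDerivAt_pow (n - k) (1 - p)).comp p ((hasDerivAt_id p).const_sub 1))
  refine h.congr_deriv ?_
  rw [hcoeff, ← Nat.sub_sub]
  ring

theorem hasDerivAt_sum_Icc_binomialTerm {n m : ℕ} (hm : m ≤ n) (p : ℝ) :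
    HasDerivAt (fun x ↦ ∑ k ∈ Icc m n, binomialTerm n x k)
      (m * n.choose m * p ^ (m - 1) * (1 - p) ^ (n - m)) p := by
  set T : ℕ → ℝ := fun k ↦ k * n.choose k * p ^ (k - 1) * (1 - p) ^ (n - k)
  have h := HasDerivAt.fun_sum fun k (_ : k ∈ Icc m n) ↦ hasDerivAt_binomialTerm n k p
  refine h.congr_deriv ?_
  have htop : T (n + 1) = 0 := by simp [T]
  calc ∑ k ∈ Icc m n, (T k - T (k + 1)) = -(T (n + 1) - T m) := by
        rw [← Finset.sum_Icc_sub hm T, ← sum_neg_distrib]; simp only [neg_sub]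
    _ = T m := by rw [htop]; ring

theorem sum_Icc_binomialTerm_sub_eq_integral {n m : ℕ} (hm : m ≤ n) (x y : ℝ) :
    ∑ k ∈ Icc m n, binomialTerm n y k - ∑ k ∈ Icc m n, binomialTerm n x k =
      m * n.choose m * ∫ t in x..y, t ^ (m - 1) * (1 - t) ^ (n - m) := by
  rw [← intervalIntegral.integral_const_mul]
  simp only [← mul_assoc]
  exact (intervalIntegral.integral_eq_sub_of_hasDerivAt
    (fun t _ ↦ hasDerivAt_sum_Icc_binomialTerm hm t)
    (Continuous.intervalIntegrable (by fun_prop) x y)).symm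

theorem sum_Icc_binomialTerm_zero {n m : ℕ} (hm : 0 < m) :
    ∑ k ∈ Icc m n, binomialTerm n 0 k = 0 :=
  sum_eq_zero fun k hk ↦ by simp [binomialTerm, zero_pow (by grind : k ≠ 0)]

theorem sum_Icc_binomialTerm_one {n m : ℕ} (hm : m ≤ n) :
    ∑ k ∈ Icc m n, binomialTerm n 1 k = 1 := by
  rw [sum_eq_single_of_mem n (mem_Icc.2 ⟨hm, le_rfl⟩)]
  · simp [binomialTerm]
  · intro k hk hkn
    simp [binomialTerm, zero_pow (by grind : n - k ≠ 0)]

theorem pow_mul_one_sub_pow_nonneg {a b : ℕ} {t : ℝ} (ht₀ : 0 ≤ t) (ht₁ : t ≤ 1) :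
    0 ≤ t ^ a * (1 - t) ^ b :=
  mul_nonneg (pow_nonneg ht₀ a) (pow_nonneg (sub_nonneg.2 ht₁) b)

theorem integral_pow_mul_one_sub_pow_mono_interval {a b : ℕ} {c x y d : ℝ} (hc : 0 ≤ c)
    (hcx : c ≤ x) (hxy : x ≤ y) (hyd : y ≤ d) (hd : d ≤ 1) :
    ∫ t in x..y, t ^ a * (1 - t) ^ b ≤ ∫ t in c..d, t ^ a * (1 - t) ^ b :=
  intervalIntegral.integral_mono_interval hcx hxy hyd
    (MeasureTheory.ae_restrict_of_forall_mem measurableSet_Ioc fun t ht ↦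
      pow_mul_one_sub_pow_nonneg (hc.trans ht.1.le) (ht.2.trans hd))
    ((by fun_prop : Continuous fun t : ℝ ↦ t ^ a * (1 - t) ^ b).intervalIntegrable _ _)

theorem mul_log_add_div_sub_le {a b v : ℝ} (hv : 0 ≤ v) (hvb : v < b) (hba : b ≤ a) :
    a * log ((a + v) / (a - v)) ≤ b * log ((b + v) / (b - v)) := by
  have hb : 0 < b := hv.trans_lt hvb
  have hseries {c : ℝ} (hc : v < c) :
      HasSum (fun k : ℕ ↦ 2 * (1 / (2 * k + 1)) * (v / c) ^ (2 * k) * v)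
        (c * log ((c + v) / (c - v))) := by
    have hc0 : 0 < c := hv.trans_lt hc
    have hlt : v / c < 1 := (div_lt_one hc0).2 hc
    have hlog : log ((c + v) / (c - v)) = log (1 + v / c) - log (1 - v / c) := by
      rw [← log_div (by positivity) (sub_pos.2 hlt).ne']
      congr 1; field_simp
    rw [hlog]
    refine ((hasSum_log_sub_log_of_abs_lt_one
      (by rwa [abs_of_nonneg (by positivity)])).mul_left c).congr_fun fun k ↦ ?_
    rw [pow_succ]
    field_simp
  refine hasSum_le (fun k ↦ ?_) (hseries (hvb.trans_le hba)) (hseries hvb)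
  have : 0 ≤ v / a := div_nonneg hv (hb.le.trans hba)
  gcongr

theorem add_pow_mul_sub_pow_le {a b : ℕ} {v : ℝ} (hv : 0 ≤ v) (hvb : v ≤ b)
    (hba : b ≤ a) :
    (a + v) ^ a * (b - v) ^ b ≤ (a - v) ^ a * (b + v) ^ b := by
  have hba' : (b : ℝ) ≤ a := by exact_mod_cast hba
  rcases hvb.lt_or_eq with hvb | rfl
  · have hlog := mul_log_add_div_sub_le hv hvb hba'
    have hb : 0 < (b : ℝ) - v := by linarith
    have ha : 0 < (a : ℝ) - v := by linarith
    rw [← log_pow, ← log_pow, log_le_log_iff (pow_pos (div_pos (by linarith) ha) _)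
      (pow_pos (div_pos (by linarith) hb) _), div_pow, div_pow,
      div_le_div_iff₀ (by positivity) (by positivity)] at hlog
    linarith
  · rcases hv.eq_or_lt with h0 | h0
    · simp [← h0]
    · have : (0 : ℝ) ≤ a - b := by linarith
      rw [sub_self, zero_pow (by exact_mod_cast h0.ne'), mul_zero]
      positivity

theorem pow_mul_one_sub_pow_add_le_sub {a b : ℕ} (hba : b ≤ a) (ha : 0 < a) {u : ℝ}
    (hu : 0 ≤ u) (hub : u ≤ b / (a + b)) :
    (a / (a + b) + u) ^ a * (1 - (a / (a + b) + u)) ^ b ≤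
      (a / (a + b) - u) ^ a * (1 - (a / (a + b) - u)) ^ b := by
  have hs : (0 : ℝ) < a + b := by positivity
  have hvb : (a + b) * u ≤ b := by rwa [le_div_iff₀ hs, mul_comm] at hub
  have e1 : (a : ℝ) / (a + b) + u = (a + (a + b) * u) / (a + b) := by field_simp
  have e2 : 1 - ((a : ℝ) / (a + b) + u) = (b - (a + b) * u) / (a + b) := by field_simp; ring
  have e3 : (a : ℝ) / (a + b) - u = (a - (a + b) * u) / (a + b) := by field_simp
  have e4 : 1 - ((a : ℝ) / (a + b) - u) = (b + (a + b) * u) / (a + b) := by field_simp; ring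
  rw [e2, e4, e1, e3, div_pow, div_pow, div_pow, div_pow, div_mul_div_comm, div_mul_div_comm]
  gcongr ?_ / _
  exact add_pow_mul_sub_pow_le (by positivity) hvb hba

theorem integral_pow_mul_one_sub_pow_mode_le {a b : ℕ} (hba : b ≤ a) (ha : 0 < a) :
    ∫ t in (a / (a + b) : ℝ)..1, t ^ a * (1 - t) ^ b ≤
      ∫ t in (0 : ℝ)..a / (a + b), t ^ a * (1 - t) ^ b := by
  set f : ℝ → ℝ := fun t ↦ t ^ a * (1 - t) ^ b
  have hs : (0 : ℝ) < a + b := by positivity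
  set x : ℝ := a / (a + b)
  set w : ℝ := b / (a + b)
  have hxw : x + w = 1 := by rw [← add_div, div_self hs.ne']
  have hw : 0 ≤ w := by positivity
  have hwx : w ≤ x := div_le_div_of_nonneg_right (by exact_mod_cast hba) hs.le
  have hf : Continuous f := by fun_prop
  calc ∫ t in x..1, f t = ∫ u in (0 : ℝ)..w, f (x + u) := by
        rw [intervalIntegral.integral_comp_add_left, add_zero, hxw]
    _ ≤ ∫ u in (0 : ℝ)..w, f (x - u) :=
        intervalIntegral.integral_mono_on (by positivity)
          ((hf.comp (continuous_const_add x)).intervalIntegrable _ _)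
          ((hf.comp (continuous_sub_left x)).intervalIntegrable _ _)
          fun u hu ↦ pow_mul_one_sub_pow_add_le_sub hba ha hu.1 hu.2
    _ = ∫ t in x - w..x, f t := by rw [intervalIntegral.integral_comp_sub_left, sub_zero]
    _ ≤ ∫ t in (0 : ℝ)..x, f t :=
        integral_pow_mul_one_sub_pow_mono_interval le_rfl (sub_nonneg.2 hwx) (by linarith) le_rfl
          (by linarith)

theorem half_le_sum_binomialTerm_of_lt_two_mul {n m : ℕ} (hmn : m < n) (h : n < 2 * m) :
    1 / 2 ≤ ∑ k ∈ Icc m n, binomialTerm n (m / n) k := by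
  have hn : (0 : ℝ) < n := by exact_mod_cast (by omega : 0 < n)
  have hp₁ : (m : ℝ) / n ≤ 1 := div_le_one_of_le₀ (by exact_mod_cast hmn.le) hn.le
  -- `(m-1)/(n-1)`, the mode of `t ^ (m-1) * (1-t) ^ (n-m)`
  have hmode : ((m - 1 : ℕ) : ℝ) / ((m - 1 : ℕ) + (n - m : ℕ)) ≤ m / n := by
    have hmn' : (m : ℝ) + 1 ≤ n := by exact_mod_cast hmn
    have hm₁ : (1 : ℝ) ≤ m := by exact_mod_cast (by omega : 1 ≤ m)
    rw [Nat.cast_sub hmn.le, Nat.cast_sub (by omega : 1 ≤ m), Nat.cast_one,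
      div_le_div_iff₀ (by linarith) hn]
    nlinarith
  have hint : ∫ t in (m / n : ℝ)..1, t ^ (m - 1) * (1 - t) ^ (n - m) ≤
      ∫ t in (0 : ℝ)..m / n, t ^ (m - 1) * (1 - t) ^ (n - m) :=
    calc _ ≤ ∫ t in (((m - 1 : ℕ) : ℝ) / ((m - 1 : ℕ) + (n - m : ℕ)))..1,
            t ^ (m - 1) * (1 - t) ^ (n - m) :=
          integral_pow_mul_one_sub_pow_mono_interval (by positivity) hmode hp₁ le_rfl le_rfl
      _ ≤ ∫ t in (0 : ℝ)..((m - 1 : ℕ) : ℝ) / ((m - 1 : ℕ) + (n - m : ℕ)),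
            t ^ (m - 1) * (1 - t) ^ (n - m) :=
          integral_pow_mul_one_sub_pow_mode_le (by omega) (by omega)
      _ ≤ _ :=
          integral_pow_mul_one_sub_pow_mono_interval le_rfl le_rfl (by positivity) hmode hp₁
  have hupper := sum_Icc_binomialTerm_sub_eq_integral hmn.le (m / n) 1
  have hlower := sum_Icc_binomialTerm_sub_eq_integral hmn.le 0 (m / n)
  rw [sum_Icc_binomialTerm_one hmn.le] at hupper
  rw [sum_Icc_binomialTerm_zero (by omega)] at hlower
  have := mul_le_mul_of_nonneg_left hint (by positivity : (0 : ℝ) ≤ m * n.choose m)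
  linarith

theorem binomial_integer_mean_median_general (n m : ℕ) (hm : m ≤ n) :
    (1 / 2 : ℝ) ≤ ∑ k ∈ Finset.Icc m n,
      (n.choose k : ℝ) * ((m : ℝ) / n) ^ k * (1 - (m : ℝ) / n) ^ (n - k) := by
  rcases le_or_gt (2 * m) n with h | h
  · exact half_le_sum_binomialTerm_of_two_mul_le h
  rcases hm.eq_or_lt with rfl | hmn
  · rw [div_self (by exact_mod_cast (by omega : m ≠ 0))]
    exact (sum_Icc_binomialTerm_one le_rfl).ge.trans' (by norm_num)
  · exact half_le_sum_binomialTerm_of_lt_two_mul hmn h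

theorem binomial_integer_mean_median (n m : ℕ) (hn : 1 ≤ n) (hm : m ≤ n) :
    (1 / 2 : ℝ) ≤ ∑ k ∈ Finset.Icc m n,
      (n.choose k : ℝ) * ((m : ℝ) / n) ^ k * (1 - (m : ℝ) / n) ^ (n - k) :=
  binomial_integer_mean_median_general n m hm
end

section
/- For integers n ≥ 2 and 1 ≤ d ≤ n-1, the tail probability α† = Σ_{k=d+1}^n C(n,k)·(d/n)^k·((n-d)/n)^(n-k) satisfies α† ≥ 1/4. -/
/-!
For fixed `d`, the tail `P(Bin(n, d/n) > d)` is nondecreasing in `n`. To pass from `n` to `n + 1`,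
interpolate by `P(Bin(n, x) + Ber(t) > d)` along the line `n x + t = d`: at `t = 0` this is the
tail for `n`, at `t = x = d/(n+1)` it is the tail for `n + 1`, and its derivative in `t` is
`(x - t) (b_{n-1,d-1}(x) - b_{n-1,d}(x))`, which is nonnegative for `t ≤ x` since the Bernstein
weights `b_{n-1,k}(x)` decrease from `k = d - 1` to `k = d` when `n x ≤ d`. The smallest case
`n = d + 1` is `(1 - 1/(d+1))^(d+1)`, and Bernoulli's inequality with exponent `(d+1)/2` bounds its
square root below by `1/2`.
-/

open Finset Polynomial

section

variable (R : Type*) [CommRing R]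

theorem bernsteinPolynomial_succ_succ (n k : ℕ) :
    bernsteinPolynomial R (n + 1) (k + 1) =
      X * bernsteinPolynomial R n k + (1 - X) * bernsteinPolynomial R n (k + 1) := by
  rcases lt_or_ge k n with hk | hk
  · obtain ⟨j, rfl⟩ := Nat.exists_eq_add_of_lt hk
    rw [bernsteinPolynomial, Nat.choose_succ_succ]
    simp only [bernsteinPolynomial, Nat.cast_add, Nat.succ_eq_add_one,
      show k + j + 1 + 1 - (k + 1) = j + 1 by omega, show k + j + 1 - k = j + 1 by omega,
      show k + j + 1 - (k + 1) = j by omega]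
    ring
  · simp only [bernsteinPolynomial, Nat.choose_succ_succ,
      Nat.choose_eq_zero_of_lt (Nat.lt_succ_of_le hk), Nat.sub_eq_zero_of_le hk,
      Nat.add_sub_add_right, add_zero, Nat.cast_zero]
    ring

noncomputable def binomialTail (n d : ℕ) : R[X] :=
  ∑ k ∈ Icc (d + 1) n, bernsteinPolynomial R n k

theorem binomialTail_succ {n d : ℕ} (hdn : d ≤ n) :
    binomialTail R (n + 1) d = binomialTail R n d + X * bernsteinPolynomial R n d := by
  have hshift : binomialTail R (n + 1) d =
      ∑ j ∈ Ico d (n + 1),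
        (X * bernsteinPolynomial R n j + (1 - X) * bernsteinPolynomial R n (j + 1)) := by
    simp only [binomialTail, ← bernsteinPolynomial_succ_succ, ← Ico_add_one_right_eq_Icc,
      sum_Ico_add']
  have hlow : ∑ j ∈ Ico d (n + 1), bernsteinPolynomial R n j =
      bernsteinPolynomial R n d + binomialTail R n d := by
    rw [sum_eq_sum_Ico_succ_bot (by omega), binomialTail, Ico_add_one_right_eq_Icc]
  have hhigh : ∑ j ∈ Ico d (n + 1), bernsteinPolynomial R n (j + 1) = binomialTail R n d := by
    rw [sum_Ico_add', sum_Ico_succ_top (by omega),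
      bernsteinPolynomial.eq_zero_of_lt R (Nat.lt_succ_self n), add_zero, binomialTail,
      Ico_add_one_right_eq_Icc]
  rw [hshift, sum_add_distrib, ← mul_sum, ← mul_sum, hlow, hhigh]
  ring

theorem derivative_binomialTail {n d : ℕ} (hdn : d ≤ n) :
    derivative (binomialTail R n d) = n * bernsteinPolynomial R (n - 1) d := by
  obtain _ | m := n
  · simp [binomialTail]
  have htelescope := sum_Ico_sub (fun j => bernsteinPolynomial R m j) hdn
  simp only [binomialTail, derivative_sum, ← Ico_add_one_right_eq_Icc, ← sum_Ico_add',
    bernsteinPolynomial.derivative_succ_aux] at htelescope ⊢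
  rw [bernsteinPolynomial.eq_zero_of_lt R (Nat.lt_succ_self m), sum_sub_distrib] at htelescope
  rw [← mul_sum, sum_sub_distrib, Nat.add_sub_cancel]
  push_cast
  linear_combination (-(m + 1 : R[X])) * htelescope

end

theorem binomialTail_eval (n d : ℕ) (x : ℝ) :
    (binomialTail ℝ n d).eval x =
      ∑ k ∈ Icc (d + 1) n, (n.choose k : ℝ) * x ^ k * (1 - x) ^ (n - k) := by
  simp [binomialTail, bernsteinPolynomial, eval_finsetSum]

theorem bernsteinPolynomial_eval_nonneg (n k : ℕ) {x : ℝ} (hx₀ : 0 ≤ x) (hx₁ : x ≤ 1) :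
    0 ≤ (bernsteinPolynomial ℝ n k).eval x := by
  simp only [bernsteinPolynomial, eval_mul, eval_pow, eval_natCast, eval_X, eval_sub, eval_one]
  have : 0 ≤ 1 - x := by linarith
  positivity

theorem bernsteinPolynomial_eval_succ_le {m k : ℕ} {x : ℝ} (hx₀ : 0 ≤ x) (hx₁ : x ≤ 1)
    (hmode : (m + 1) * x ≤ k + 1) :
    (bernsteinPolynomial ℝ m (k + 1)).eval x ≤ (bernsteinPolynomial ℝ m k).eval x := by
  rcases lt_or_ge k m with hk | hk
  · obtain ⟨j, rfl⟩ := Nat.exists_eq_add_of_lt hk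
    have hchoose :
        ((k + j + 1).choose (k + 1) : ℝ) * (k + 1) = ((k + j + 1).choose k) * (j + 1) := by
      exact_mod_cast (Nat.choose_succ_right_eq (k + j + 1) k).trans (by congr 1; omega)
    simp only [bernsteinPolynomial, eval_mul, eval_pow, eval_natCast, eval_X, eval_sub, eval_one,
      show k + j + 1 - k = j + 1 by omega, show k + j + 1 - (k + 1) = j by omega]
    have hpos : 0 ≤ ((k + j + 1).choose k : ℝ) * x ^ k * (1 - x) ^ j := by
      have : 0 ≤ 1 - x := by linarith
      positivity
    push_cast at hmode
    refine le_of_mul_le_mul_right ?_ (by positivity : (0 : ℝ) < k + 1)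
    calc ((k + j + 1).choose (k + 1) : ℝ) * x ^ (k + 1) * (1 - x) ^ j * (k + 1)
        = ((k + j + 1).choose k : ℝ) * x ^ k * (1 - x) ^ j * ((j + 1) * x) := by
          linear_combination (x ^ (k + 1) * (1 - x) ^ j) * hchoose
      _ ≤ ((k + j + 1).choose k : ℝ) * x ^ k * (1 - x) ^ j * ((k + 1) * (1 - x)) :=
          mul_le_mul_of_nonneg_left (by linarith) hpos
      _ = ((k + j + 1).choose k : ℝ) * x ^ k * (1 - x) ^ (j + 1) * (k + 1) := by ring
  · rw [bernsteinPolynomial.eq_zero_of_lt ℝ (Nat.lt_succ_of_le hk), eval_zero]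
    exact bernsteinPolynomial_eval_nonneg m k hx₀ hx₁

/-- The tail `P(Y + B > d)` for independent `Y ∼ Bin(n, x)` and `B ∼ Ber(t)`, along the line
`n x + t = d` of constant mean. -/
noncomputable def mixedTail (n d : ℕ) (t : ℝ) : ℝ :=
  (binomialTail ℝ n d).eval ((d - t) / n) + t * (bernsteinPolynomial ℝ n d).eval ((d - t) / n)

theorem hasDerivAt_mixedTail {n d : ℕ} (hd : 0 < d) (hdn : d ≤ n) (t : ℝ) :
    HasDerivAt (mixedTail n d)
      (((d - t) / n - t) * ((bernsteinPolynomial ℝ (n - 1) (d - 1)).eval ((d - t) / n) -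
        (bernsteinPolynomial ℝ (n - 1) d).eval ((d - t) / n))) t := by
  obtain ⟨m, rfl⟩ : ∃ m, n = m + 1 := ⟨n - 1, by omega⟩
  obtain ⟨e, rfl⟩ : ∃ e, d = e + 1 := ⟨d - 1, by omega⟩
  have hx :
      HasDerivAt (fun t : ℝ => ((e + 1 : ℕ) - t) / (m + 1 : ℕ)) (-1 / (m + 1 : ℕ)) t := by
    simpa using ((hasDerivAt_id t).const_sub _).div_const _
  have hT := ((binomialTail ℝ (m + 1) (e + 1)).hasDerivAt _).comp t hx
  have hB := ((bernsteinPolynomial ℝ (m + 1) (e + 1)).hasDerivAt _).comp t hx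
  refine (hT.add ((hasDerivAt_id t).mul hB)).congr_deriv ?_
  rw [derivative_binomialTail ℝ hdn, bernsteinPolynomial.derivative_succ_aux,
    bernsteinPolynomial_succ_succ]
  simp only [Function.comp_def, eval_mul, eval_sub, eval_natCast, eval_X, eval_one, eval_add, id,
    Nat.add_sub_cancel]
  have hn : ((m + 1 : ℕ) : ℝ) ≠ 0 := by positivity
  field_simp
  push_cast
  ring

theorem monotoneOn_mixedTail {n d : ℕ} (hd : 0 < d) (hdn : d ≤ n) :
    MonotoneOn (mixedTail n d) (Set.Icc 0 (d / (n + 1))) := by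
  have hn : (0 : ℝ) < n := by exact_mod_cast hd.trans_le hdn
  have hdn' : (d : ℝ) ≤ n := by exact_mod_cast hdn
  have hderiv := hasDerivAt_mixedTail hd hdn
  refine monotoneOn_of_deriv_nonneg (convex_Icc _ _)
    (fun t _ => (hderiv t).continuousAt.continuousWithinAt)
    (fun t _ => (hderiv t).differentiableAt.differentiableWithinAt) fun t ht => ?_
  rw [interior_Icc, Set.mem_Ioo, lt_div_iff₀ (by positivity)] at ht
  rw [(hderiv t).deriv]
  have hxt : t ≤ (d - t) / n := by rw [le_div_iff₀ hn]; nlinarith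
  have hx₁ : (d - t) / n ≤ 1 := by rw [div_le_one hn]; linarith
  have hmode : ((n - 1 : ℕ) + 1 : ℝ) * ((d - t) / n) ≤ (d - 1 : ℕ) + 1 := by
    rw [Nat.cast_sub (by omega), Nat.cast_sub hd, Nat.cast_one, sub_add_cancel, sub_add_cancel,
      mul_div_cancel₀ _ hn.ne']
    linarith
  have hmono := bernsteinPolynomial_eval_succ_le (by linarith) hx₁ hmode
  rw [Nat.sub_add_cancel hd] at hmono
  exact mul_nonneg (by linarith) (by linarith)

theorem mixedTail_zero (n d : ℕ) :
    mixedTail n d 0 = (binomialTail ℝ n d).eval ((d : ℝ) / n) := by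
  simp [mixedTail]

theorem mixedTail_div_succ {n d : ℕ} (hn : n ≠ 0) (hdn : d ≤ n) :
    mixedTail n d (d / (n + 1)) = (binomialTail ℝ (n + 1) d).eval ((d : ℝ) / (n + 1)) := by
  have hx : ((d : ℝ) - d / (n + 1)) / n = d / (n + 1) := by
    field_simp
    ring
  simp [mixedTail, hx, binomialTail_succ ℝ hdn]

theorem binomialTail_eval_le_succ {n d : ℕ} (hd : 0 < d) (hdn : d ≤ n) :
    (binomialTail ℝ n d).eval ((d : ℝ) / n) ≤
      (binomialTail ℝ (n + 1) d).eval ((d : ℝ) / (n + 1 : ℕ)) := by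
  have hpos : (0 : ℝ) ≤ d / (n + 1) := by positivity
  rw [← mixedTail_zero, Nat.cast_succ, ← mixedTail_div_succ (by omega) hdn]
  exact monotoneOn_mixedTail hd hdn ⟨le_rfl, hpos⟩ ⟨hpos, le_rfl⟩ hpos

theorem quarter_le_one_sub_inv_rpow {m : ℝ} (hm : 2 ≤ m) : 1 / 4 ≤ (1 - m⁻¹) ^ m := by
  have hinv : m⁻¹ ≤ 1 := inv_le_one_of_one_le₀ (by linarith)
  have hbernoulli := one_add_mul_self_le_rpow_one_add (s := -m⁻¹) (by linarith) (p := m / 2)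
    (by linarith)
  rw [show 1 + m / 2 * -m⁻¹ = 1 / 2 by field_simp; ring, ← sub_eq_add_neg] at hbernoulli
  calc (1 / 4 : ℝ) = (1 / 2) ^ 2 := by norm_num
    _ ≤ ((1 - m⁻¹) ^ (m / 2)) ^ 2 := by gcongr
    _ = (1 - m⁻¹) ^ m := by
      rw [← Real.rpow_natCast, ← Real.rpow_mul (by linarith)]
      norm_num

theorem quarter_le_binomialTail_succ_self (d : ℕ) (hd : 0 < d) :
    1 / 4 ≤ (binomialTail ℝ (d + 1) d).eval ((d : ℝ) / (d + 1 : ℕ)) := by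
  have hm : (2 : ℝ) ≤ (d + 1 : ℕ) := by exact_mod_cast Nat.succ_le_succ hd
  have hbase : (d / (d + 1 : ℕ) : ℝ) = 1 - ((d + 1 : ℕ) : ℝ)⁻¹ := by
    field_simp
    push_cast
    ring
  have hquarter := quarter_le_one_sub_inv_rpow hm
  rw [← hbase, Real.rpow_natCast] at hquarter
  simpa [binomialTail, bernsteinPolynomial] using hquarter

theorem alpha_dagger_ge_quarter_general (n d : ℕ) (hd : 1 ≤ d) (hdn : d ≤ n - 1) :
    (1 / 4 : ℝ) ≤ ∑ k ∈ Finset.Icc (d + 1) n,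
      (n.choose k : ℝ) * ((d : ℝ) / n) ^ k * (((n : ℝ) - d) / n) ^ (n - k) := by
  have hmono : ∀ m, d + 1 ≤ m → 1 / 4 ≤ (binomialTail ℝ m d).eval ((d : ℝ) / m) := by
    intro m hm
    induction m, hm using Nat.le_induction with
    | base => exact quarter_le_binomialTail_succ_self d hd
    | succ m hm ih => exact ih.trans (binomialTail_eval_le_succ hd (by omega))
  have hn : (n : ℝ) ≠ 0 := by norm_cast; omega
  simpa [binomialTail_eval, one_sub_div hn] using hmono n (by omega)

theorem alpha_dagger_ge_quarter (n d : ℕ) (hn : 2 ≤ n) (hd : 1 ≤ d) (hdn : d ≤ n - 1) :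
    (1 / 4 : ℝ) ≤ ∑ k ∈ Finset.Icc (d + 1) n,
      (n.choose k : ℝ) * ((d : ℝ) / n) ^ k * (((n : ℝ) - d) / n) ^ (n - k) :=
  alpha_dagger_ge_quarter_general n d hd hdn
end
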